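/- arXiv:1310.2498 — 5 statements merged into one kernel-verified Lean document; each statement's English description precedes it below -/
import Mathlib

section
/- Let h>0 and u \in L^\infty_{loc}([0,\infty)^d) be Pareto-monotone with u=0 on \Gamma_h. Suppose for some z \in (h\mathbf{1},\infty) the support of the map x \mapsto S(h,x,u) is contained in [0,z]. Then u(x) = u(\pi_z(x)) for all x \in [0,\infty)^d, where \pi_z(x) = (\min(x_1,z_1),\dots,\min(x_d,z_d)). -/
open Finset

/-- Backward-difference scheme operator. -/
noncomputable def Sh {d : ℕ} (h : ℝ) (x : Fin d → ℝ) (u : (Fin d → ℝ) → ℝ) : ℝ :=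
  ∏ i : Fin d, (u x - u (Function.update x i (x i - h))) / h

/-!
Induct on `∑ i, x i` in steps of `h`. If some `x i ≤ h`, both `x` and `x ⊓ z` lie in the
boundary layer where `u` vanishes; if `x ≤ z` there is nothing to prove. Otherwise `x` is outside
the support of `S(h, ·, u)`, so one backward difference vanishes: `u x = u y` with
`y = x - h eᵢ`. Monotonicity then squeezes `u (y ⊓ z) ≤ u (x ⊓ z) ≤ u x = u y`, and
`u y = u (y ⊓ z)` by induction.
-/

theorem Set.forall_mem_of_descent {α : Type*} {s : Set α} {P : α → Prop} (φ : α → ℝ)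
    (hφ : ∀ x ∈ s, 0 ≤ φ x) {h : ℝ} (hh : 0 < h)
    (step : ∀ x ∈ s, (∀ y ∈ s, φ y ≤ φ x - h → P y) → P x) :
    ∀ x ∈ s, P x := by
  suffices H : ∀ n : ℕ, ∀ x ∈ s, φ x ≤ n * h → P x by
    intro x hx
    exact H ⌈φ x / h⌉₊ x hx ((div_le_iff₀ hh).mp (Nat.le_ceil _))
  intro n
  induction n with
  | zero =>
    intro x hx hn
    refine step x hx fun y hy hyx => absurd (hφ y hy) ?_
    push_cast at hn
    linarith
  | succ n ih =>
    intro x hx hn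
    refine step x hx fun y hy hyx => ih y hy ?_
    push_cast at hn
    linarith

theorem exists_update_eq_of_Sh_eq_zero {d : ℕ} {h : ℝ} (hh : h ≠ 0) {x : Fin d → ℝ}
    {u : (Fin d → ℝ) → ℝ} (hS : Sh h x u = 0) :
    ∃ i, u x = u (Function.update x i (x i - h)) := by
  obtain ⟨i, -, hi⟩ := Finset.prod_eq_zero_iff.mp hS
  exact ⟨i, sub_eq_zero.mp ((div_eq_zero_iff.mp hi).resolve_right hh)⟩

theorem Finset.sum_update_sub_univ {ι β : Type*} [Fintype ι] [DecidableEq ι] [AddCommGroup β]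
    (x : ι → β) (i : ι) (h : β) :
    ∑ j, Function.update x i (x i - h) j = ∑ j, x j - h := by
  rw [Finset.sum_update_of_mem (mem_univ i), ← Finset.add_sum_erase _ _ (mem_univ i),
    Finset.sdiff_singleton_eq_erase]
  abel

theorem MonotoneOn.eq_inf_of_le_of_eq {α β : Type*} [Lattice α] [PartialOrder β] {s : Set α}
    {u : α → β} (hu : MonotoneOn u s) {x y z : α} (hx : x ∈ s) (hxz : x ⊓ z ∈ s)
    (hyz : y ⊓ z ∈ s) (hyx : y ≤ x) (hxy : u x = u y) (hy : u y = u (y ⊓ z)) :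
    u x = u (x ⊓ z) :=
  le_antisymm (hxy ▸ hy ▸ hu hyz hxz (inf_le_inf_right z hyx)) (hu hxz hx inf_le_left)

theorem stmt1_general {d : ℕ} (h : ℝ) (hh : 0 < h)
    (u : (Fin d → ℝ) → ℝ)
    (hu_mono : MonotoneOn u {x | ∀ i, 0 ≤ x i})
    (hbdry : ∀ x : Fin d → ℝ, (∀ i, 0 ≤ x i) → (¬ ∀ i, h < x i) → u x = 0)
    (z : Fin d → ℝ) (hz : ∀ i, h < z i)
    (hsupp : ∀ x : Fin d → ℝ, (∀ i, 0 ≤ x i) → Sh h x u ≠ 0 → ∀ i, 0 ≤ x i ∧ x i ≤ z i) :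
    ∀ x : Fin d → ℝ, (∀ i, 0 ≤ x i) → u x = u (fun i => min (x i) (z i)) := by
  have hinf_mem : ∀ x : Fin d → ℝ, 0 ≤ x → 0 ≤ x ⊓ z :=
    fun x hx => le_inf hx fun i => hh.le.trans (hz i).le
  refine Set.forall_mem_of_descent (fun x => ∑ i, x i)
    (fun x hx => Finset.sum_nonneg fun i _ => hx i) hh fun x hx ih => ?_
  change u x = u (x ⊓ z)
  by_cases hlayer : ∀ i, h < x i
  swap
  · rw [hbdry x hx hlayer, hbdry _ (hinf_mem x hx)
      fun hall => hlayer fun i => (hall i).trans_le inf_le_left]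
  by_cases hxz : x ≤ z
  · rw [inf_eq_left.mpr hxz]
  obtain ⟨j, hj⟩ : ∃ i, u x = u (Function.update x i (x i - h)) :=
    exists_update_eq_of_Sh_eq_zero hh.ne' (of_not_not fun hS => hxz fun i => (hsupp x hx hS i).2)
  set y := Function.update x j (x j - h)
  have hy : 0 ≤ y := le_update_iff.mpr ⟨sub_nonneg.mpr (hlayer j).le, fun k _ => hx k⟩
  have hyx : y ≤ x := update_le_self_iff.mpr (sub_le_self _ hh.le)
  exact hu_mono.eq_inf_of_le_of_eq hx (hinf_mem x hx) (hinf_mem y hy) hyx hj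
    (ih y hy (Finset.sum_update_sub_univ x j h).le)

/-- Boundary condition at infinity: `u = u ∘ π_z` when the scheme's right-hand side is
supported in `[0,z]`. -/
theorem stmt1 {d : ℕ} (h : ℝ) (hh : 0 < h)
    (u : (Fin d → ℝ) → ℝ)
    (hu_mono : MonotoneOn u {x | ∀ i, 0 ≤ x i})
    (hu_loc : ∀ R : ℝ, ∃ M, ∀ x : Fin d → ℝ, (∀ i, 0 ≤ x i ∧ x i ≤ R) → |u x| ≤ M)
    (hbdry : ∀ x : Fin d → ℝ, (∀ i, 0 ≤ x i) → (¬ ∀ i, h < x i) → u x = 0)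
    (z : Fin d → ℝ) (hz : ∀ i, h < z i)
    (hsupp : ∀ x : Fin d → ℝ, (∀ i, 0 ≤ x i) → Sh h x u ≠ 0 → ∀ i, 0 ≤ x i ∧ x i ≤ z i) :
    ∀ x : Fin d → ℝ, (∀ i, 0 ≤ x i) → u x = u (fun i => min (x i) (z i)) :=
  stmt1_general h hh u hu_mono hbdry z hz hsupp
end

section
/- Let h>0 and u \in L^\infty_{loc}([0,\infty)^d) be Pareto-monotone with u=0 on \Gamma_h. Then for any R>0 and all x,y \in (h,R]^d, |u(x)-u(y)| \le 2 d^2 R^{(d-1)/d} \|S(h,\cdot,u)\|_{L^\infty((h,R]^d)}^{1/d} (|x-y|^{1/d} + h^{1/d}). -/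
open Finset

/-!
Monotonicity makes the backward differences `D_j u(v) = u v - u (v - h e_j)` nonnegative, and the
bound on `S` says that their product is at most `M h^d` in the box. So for costs `ℓ, μ` with
`ℓ μ^(d-1) = M h^d`, at every point of the box `D_i u ≤ ℓ` or `D_j u ≤ μ` for some `j ≠ i`.
Walk down from `w` by steps of length `h`, in direction `i` when that is cheap and in a cheap
other direction otherwise. The walk ends at `v_i ≤ c`, below `update w i c`, after at most
`(w_i - c)/h + 1` steps of the first kind, or where `u = 0`, after at most `dR/h` steps of the
second kind. Balancing `ℓ` against `μ` bounds `u w - u (update w i c)` by a multiple of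
`M^(1/d) R^((d-1)/d) (w_i - c + h)^(1/d)`. Going from `x` down to `x ⊓ y` one coordinate at a
time, and using `u (x ⊓ y) ≤ u y`, finishes the proof.
-/

open Function

theorem le_or_exists_le_of_prod_le {ι : Type*} [Fintype ι] [DecidableEq ι] {f : ι → ℝ}
    {κ μ : ℝ} (hκ : 0 ≤ κ) (hμ : 0 ≤ μ) (hf : ∏ j, f j ≤ κ * μ ^ Fintype.card ι) (i : ι) :
    f i ≤ κ * μ ∨ ∃ j ≠ i, f j ≤ μ := by
  by_contra! hcon
  obtain ⟨hi, hj⟩ := hcon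
  have hrest : ∏ j ∈ univ.erase i, μ ≤ ∏ j ∈ univ.erase i, f j :=
    prod_le_prod (fun _ _ => hμ) fun j hj' => (hj j (ne_of_mem_erase hj')).le
  have hrest_pos : 0 < ∏ j ∈ univ.erase i, f j :=
    prod_pos fun j hj' => hμ.trans_lt (hj j (ne_of_mem_erase hj'))
  have : κ * μ ^ Fintype.card ι < ∏ j, f j :=
    calc κ * μ ^ Fintype.card ι = κ * μ * ∏ j ∈ univ.erase i, μ := by
          rw [mul_assoc, mul_prod_erase univ (fun _ => μ) (mem_univ i), prod_const, card_univ]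
      _ ≤ κ * μ * ∏ j ∈ univ.erase i, f j := mul_le_mul_of_nonneg_left hrest (by positivity)
      _ < f i * ∏ j ∈ univ.erase i, f j := mul_lt_mul_of_pos_right hi hrest_pos
      _ = ∏ j, f j := mul_prod_erase univ f (mem_univ i)
  linarith

theorem sum_update_sub {ι : Type*} [Fintype ι] [DecidableEq ι] (v : ι → ℝ) (j : ι) (t : ℝ) :
    ∑ k, update v j (v j - t) k = ∑ k, v k - t := by
  rw [sum_update_of_mem (mem_univ j), sum_eq_add_sum_sdiff_singleton_of_mem (mem_univ j) v]
  ring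

theorem sub_le_card_mul_of_piecewise {ι : Type*} [Fintype ι] [DecidableEq ι]
    {u : (ι → ℝ) → ℝ} {x z : ι → ℝ} {C : ℝ}
    (hstep : ∀ (s : Finset ι) (j : ι), j ∉ s →
      u (s.piecewise z x) - u (update (s.piecewise z x) j (z j)) ≤ C) :
    u x - u z ≤ Fintype.card ι * C := by
  suffices ∀ s : Finset ι, u x - u (s.piecewise z x) ≤ #s * C by
    simpa [piecewise_univ] using this univ
  intro s
  induction s using Finset.induction_on with
  | empty => simp
  | insert j s hj ih =>
    rw [piecewise_insert, card_insert_of_notMem hj]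
    push_cast
    linarith [hstep s j hj]

section Scheme

variable {d : ℕ} {h R M : ℝ} {u : (Fin d → ℝ) → ℝ}

noncomputable def bwdDiff (h : ℝ) (u : (Fin d → ℝ) → ℝ) (x : Fin d → ℝ) (i : Fin d) : ℝ :=
  u x - u (update x i (x i - h))

theorem Sh_eq_prod_bwdDiff_div (x : Fin d → ℝ) : Sh h x u = (∏ i, bwdDiff h u x i) / h ^ d := by
  rw [Sh, prod_div_distrib, prod_const, card_univ, Fintype.card_fin]
  rfl

theorem update_sub_nonneg {v : Fin d → ℝ} (hv : ∀ k, 0 ≤ v k) {j : Fin d} (hj : h ≤ v j) :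
    ∀ k, 0 ≤ update v j (v j - h) k := by
  intro k
  rcases eq_or_ne k j with rfl | hk
  · simpa using hj
  · simpa [hk] using hv k

theorem nonneg_of_monotoneOn_of_eq_zero (hh : 0 ≤ h) (hd : d ≠ 0)
    (hmono : MonotoneOn u {x | ∀ i, 0 ≤ x i})
    (hbdry : ∀ x : Fin d → ℝ, (∀ i, 0 ≤ x i) → (¬ ∀ i, h < x i) → u x = 0)
    {x : Fin d → ℝ} (hx : ∀ i, 0 ≤ x i) : 0 ≤ u x := by
  have hu0 : u 0 = 0 :=
    hbdry 0 (fun _ => le_rfl) fun hall => (hall ⟨0, Nat.pos_of_ne_zero hd⟩).not_ge hh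
  calc 0 = u 0 := hu0.symm
    _ ≤ u x := hmono (fun _ => le_rfl) hx hx

theorem le_add_of_dichotomy (hh : 0 < h) (hmono : MonotoneOn u {x | ∀ i, 0 ≤ x i})
    (hbdry : ∀ x : Fin d → ℝ, (∀ i, 0 ≤ x i) → (¬ ∀ i, h < x i) → u x = 0)
    {w : Fin d → ℝ} (hw : ∀ j, h < w j ∧ w j ≤ R) {i : Fin d} {c ℓ μ : ℝ} (hc : 0 ≤ c)
    (hℓ : 0 ≤ ℓ) (hμ : 0 ≤ μ)
    (hdich : ∀ v : Fin d → ℝ, (∀ j, h < v j ∧ v j ≤ R) →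
      bwdDiff h u v i ≤ ℓ ∨ ∃ j ≠ i, bwdDiff h u v j ≤ μ)
    -- `m` and `n` are the numbers of steps still allowed in direction `i` and in the others
    (m n : ℕ) (v : Fin d → ℝ) (hv : ∀ j, 0 ≤ v j) (hvw : v ≤ w)
    (hm : v i ≤ c + m * h) (hn : ∑ j, v j - v i ≤ n * h) :
    u v ≤ u (update w i c) + ℓ * m + μ * n := by
  have hcost : 0 ≤ ℓ * m + μ * n := by positivity
  have hy : ∀ j, 0 ≤ update w i c j := by
    intro j
    rcases eq_or_ne j i with rfl | hj
    · simpa using hc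
    · simpa [hj] using hh.le.trans (hw j).1.le
  have huy := nonneg_of_monotoneOn_of_eq_zero hh.le (Fin.pos i).ne' hmono hbdry hy
  by_cases hbox : ∀ j, h < v j
  swap
  · rw [hbdry v hv hbox]
    linarith
  by_cases hvc : v i ≤ c
  · have : u v ≤ u (update w i c) := hmono hv hy (le_update_iff.2 ⟨hvc, fun j _ => hvw j⟩)
    linarith
  push Not at hvc
  have hstep_le : ∀ j, update v j (v j - h) ≤ w := fun j =>
    (update_le_self_iff.2 (by linarith)).trans hvw
  rcases hdich v fun j => ⟨hbox j, (hvw j).trans (hw j).2⟩ with hi | ⟨j, hji, hj⟩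
  · obtain ⟨m, rfl⟩ : ∃ m', m = m' + 1 := Nat.exists_eq_add_one.2 <| Nat.pos_of_ne_zero <| by
      rintro rfl
      simp only [CharP.cast_eq_zero, zero_mul, add_zero] at hm
      linarith
    have := le_add_of_dichotomy hh hmono hbdry hw hc hℓ hμ hdich m n (update v i (v i - h))
      (update_sub_nonneg hv (hbox i).le) (hstep_le i)
      (by rw [update_self]; push_cast at hm; linarith)
      (by rw [sum_update_sub, update_self]; linarith)
    rw [bwdDiff] at hi
    push_cast
    linarith
  · obtain ⟨n, rfl⟩ : ∃ n', n = n' + 1 := Nat.exists_eq_add_one.2 <| Nat.pos_of_ne_zero <| by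
      rintro rfl
      have := add_le_sum (fun k _ => hv k) (mem_univ i) (mem_univ j) hji.symm
      simp only [CharP.cast_eq_zero, zero_mul] at hn
      linarith [hbox j]
    have := le_add_of_dichotomy hh hmono hbdry hw hc hℓ hμ hdich m n (update v j (v j - h))
      (update_sub_nonneg hv (hbox j).le) (hstep_le j)
      (by rwa [update_of_ne hji.symm])
      (by rw [sum_update_sub, update_of_ne hji.symm]; push_cast at hn; linarith)
    rw [bwdDiff] at hj
    push_cast
    linarith
termination_by m + n

theorem sub_update_le_of_dichotomy (hh : 0 < h) (hmono : MonotoneOn u {x | ∀ i, 0 ≤ x i})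
    (hbdry : ∀ x : Fin d → ℝ, (∀ i, 0 ≤ x i) → (¬ ∀ i, h < x i) → u x = 0)
    {w : Fin d → ℝ} (hw : ∀ j, h < w j ∧ w j ≤ R) {i : Fin d} {c ℓ μ : ℝ} (hc : 0 ≤ c)
    (hcw : c ≤ w i) (hℓ : 0 ≤ ℓ) (hμ : 0 ≤ μ)
    (hdich : ∀ v : Fin d → ℝ, (∀ j, h < v j ∧ v j ≤ R) →
      bwdDiff h u v i ≤ ℓ ∨ ∃ j ≠ i, bwdDiff h u v j ≤ μ) :
    u w - u (update w i c) ≤ (ℓ * (w i - c + h) + μ * (d * R)) / h := by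
  set m := ⌈(w i - c) / h⌉₊
  set n := ⌈(∑ j, w j - w i) / h⌉₊
  have hrest : 0 ≤ ∑ j, w j - w i :=
    sub_nonneg.2 <| single_le_sum (fun j _ => hh.le.trans (hw j).1.le) (mem_univ i)
  have hm : w i - c ≤ m * h := (div_le_iff₀ hh).1 (Nat.le_ceil _)
  have hn : ∑ j, w j - w i ≤ n * h := (div_le_iff₀ hh).1 (Nat.le_ceil _)
  have hm' : m * h < w i - c + h := by
    have := Nat.ceil_lt_add_one (div_nonneg (sub_nonneg.2 hcw) hh.le)
    rwa [div_add_one hh.ne', lt_div_iff₀ hh] at this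
  have hn' : n * h < ∑ j, w j - w i + h := by
    have := Nat.ceil_lt_add_one (div_nonneg hrest hh.le)
    rwa [div_add_one hh.ne', lt_div_iff₀ hh] at this
  have hsum : ∑ j, w j ≤ d * R := by
    simpa using sum_le_card_nsmul univ w R fun j _ => (hw j).2
  have hdesc := le_add_of_dichotomy hh hmono hbdry hw hc hℓ hμ hdich m n w
    (fun j => hh.le.trans (hw j).1.le) le_rfl (by linarith) hn
  rw [le_div_iff₀ hh]
  calc (u w - u (update w i c)) * h ≤ (ℓ * m + μ * n) * h :=
        mul_le_mul_of_nonneg_right (by linarith) hh.le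
    _ = ℓ * (m * h) + μ * (n * h) := by ring
    _ ≤ ℓ * (w i - c + h) + μ * (d * R) :=
      add_le_add (mul_le_mul_of_nonneg_left hm'.le hℓ)
        (mul_le_mul_of_nonneg_left (by linarith [(hw i).1]) hμ)

theorem sub_update_le_of_Sh_le (hh : 0 < h) (hmono : MonotoneOn u {x | ∀ i, 0 ≤ x i})
    (hbdry : ∀ x : Fin d → ℝ, (∀ i, 0 ≤ x i) → (¬ ∀ i, h < x i) → u x = 0)
    (hS : ∀ x : Fin d → ℝ, (∀ i, h < x i ∧ x i ≤ R) → |Sh h x u| ≤ M)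
    {w : Fin d → ℝ} (hw : ∀ j, h < w j ∧ w j ≤ R) {i : Fin d} {c : ℝ} (hc : 0 ≤ c)
    (hcw : c ≤ w i) {s : ℝ} (hs : 0 < s) :
    u w - u (update w i c) ≤ M ^ ((1 : ℝ) / d) * s * ((w i - c + h) / s ^ d + d * R) := by
  have hM : 0 ≤ M := (abs_nonneg _).trans (hS w hw)
  set A := M ^ ((1 : ℝ) / d) with hA_def
  have hA : A ^ d = M := by
    rw [hA_def, one_div]
    exact Real.rpow_inv_natCast_pow hM (Fin.pos i).ne'
  have hdich : ∀ v : Fin d → ℝ, (∀ j, h < v j ∧ v j ≤ R) →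
      bwdDiff h u v i ≤ h * A * s / s ^ d ∨ ∃ j ≠ i, bwdDiff h u v j ≤ h * A * s := by
    intro v hv
    have hprod : ∏ j, bwdDiff h u v j ≤ 1 / s ^ d * (h * A * s) ^ Fintype.card (Fin d) := by
      have := (le_abs_self _).trans (hS v hv)
      rw [Sh_eq_prod_bwdDiff_div, div_le_iff₀ (by positivity)] at this
      rw [Fintype.card_fin, mul_pow, mul_pow, hA]
      field_simp
      linarith
    simpa only [one_div_mul_eq_div] using
      le_or_exists_le_of_prod_le (by positivity) (by positivity) hprod i
  have hA0 : 0 ≤ A := by positivity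
  calc u w - u (update w i c)
      ≤ (h * A * s / s ^ d * (w i - c + h) + h * A * s * (d * R)) / h :=
        sub_update_le_of_dichotomy hh hmono hbdry hw hc hcw (by positivity) (by positivity) hdich
    _ = A * s * ((w i - c + h) / s ^ d + d * R) := by
      field_simp

theorem sub_update_le (hh : 0 < h) (hmono : MonotoneOn u {x | ∀ i, 0 ≤ x i})
    (hbdry : ∀ x : Fin d → ℝ, (∀ i, 0 ≤ x i) → (¬ ∀ i, h < x i) → u x = 0)
    (hS : ∀ x : Fin d → ℝ, (∀ i, h < x i ∧ x i ≤ R) → |Sh h x u| ≤ M)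
    {w : Fin d → ℝ} (hw : ∀ j, h < w j ∧ w j ≤ R) {i : Fin d} {c : ℝ} (hc : 0 ≤ c)
    (hcw : c ≤ w i) :
    u w - u (update w i c) ≤ 2 * d * R ^ (((d : ℝ) - 1) / d) * M ^ ((1 : ℝ) / d) *
      ((w i - c) ^ ((1 : ℝ) / d) + h ^ ((1 : ℝ) / d)) := by
  have hd : (1 : ℝ) ≤ d := by exact_mod_cast Fin.pos i
  have hR : 0 < R := hh.trans_le ((hw i).1.le.trans (hw i).2)
  have hM : 0 ≤ M := (abs_nonneg _).trans (hS w hw)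
  set P := w i - c + h
  have hP : 0 < P := by linarith
  -- the choice `s ^ d = P / R` balances the two costs
  set s := (P / R) ^ ((1 : ℝ) / d) with hs_def
  have hs : s ^ d = P / R := by
    rw [hs_def, one_div]
    exact Real.rpow_inv_natCast_pow (by positivity) (Fin.pos i).ne'
  have hsR : s * R = P ^ ((1 : ℝ) / d) * R ^ (((d : ℝ) - 1) / d) := by
    rw [hs_def, Real.div_rpow hP.le hR.le, show ((d : ℝ) - 1) / d = 1 - 1 / d by field_simp,
      Real.rpow_sub hR, Real.rpow_one]
    field_simp
  calc u w - u (update w i c)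
      ≤ M ^ ((1 : ℝ) / d) * s * (P / s ^ d + d * R) :=
        sub_update_le_of_Sh_le hh hmono hbdry hS hw hc hcw (by positivity)
    _ = (d + 1) * M ^ ((1 : ℝ) / d) * (s * R) := by
      rw [hs]
      field_simp
      ring
    _ = (d + 1) * R ^ (((d : ℝ) - 1) / d) * M ^ ((1 : ℝ) / d) * P ^ ((1 : ℝ) / d) := by
      rw [hsR]
      ring
    _ ≤ 2 * d * R ^ (((d : ℝ) - 1) / d) * M ^ ((1 : ℝ) / d) *
        ((w i - c) ^ ((1 : ℝ) / d) + h ^ ((1 : ℝ) / d)) := by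
      gcongr
      · linarith
      · exact Real.rpow_add_le_add_rpow (by linarith) hh.le (by positivity)
          (div_le_one_of_le₀ hd (by positivity))

theorem sub_le_of_Sh_le (hh : 0 < h) (hmono : MonotoneOn u {x | ∀ i, 0 ≤ x i})
    (hbdry : ∀ x : Fin d → ℝ, (∀ i, 0 ≤ x i) → (¬ ∀ i, h < x i) → u x = 0)
    (hS : ∀ x : Fin d → ℝ, (∀ i, h < x i ∧ x i ≤ R) → |Sh h x u| ≤ M)
    {x y : Fin d → ℝ} (hx : ∀ i, h < x i ∧ x i ≤ R) (hy : ∀ i, h < y i ∧ y i ≤ R) :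
    u x - u y ≤ 2 * (d : ℝ) ^ 2 * R ^ (((d : ℝ) - 1) / d) * M ^ ((1 : ℝ) / d) *
      ((Real.sqrt (∑ i, (x i - y i) ^ 2)) ^ ((1 : ℝ) / d) + h ^ ((1 : ℝ) / d)) := by
  have hM : 0 ≤ M := (abs_nonneg _).trans (hS x hx)
  set T := Real.sqrt (∑ i, (x i - y i) ^ 2)
  set C := 2 * d * R ^ (((d : ℝ) - 1) / d) * M ^ ((1 : ℝ) / d) *
    (T ^ ((1 : ℝ) / d) + h ^ ((1 : ℝ) / d)) with hC
  set z := x ⊓ y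
  have hz : ∀ j, h < z j ∧ z j ≤ R := fun j =>
    ⟨lt_min (hx j).1 (hy j).1, (min_le_left _ _).trans (hx j).2⟩
  have hzy : u z ≤ u y :=
    hmono (fun j => hh.le.trans (hz j).1.le) (fun j => hh.le.trans (hy j).1.le) inf_le_right
  have hxz : u x - u z ≤ d * C := by
    refine (sub_le_card_mul_of_piecewise fun s j hj => ?_).trans_eq (by rw [Fintype.card_fin])
    have hw : ∀ k, h < s.piecewise z x k ∧ s.piecewise z x k ≤ R := fun k => by
      by_cases hk : k ∈ s <;> simp [hk, hz k, hx k]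
    have hwj : s.piecewise z x j = x j := piecewise_eq_of_notMem _ _ _ hj
    have hxzT : x j - z j ≤ T := by
      refine le_trans ?_ (Real.abs_le_sqrt (single_le_sum (f := fun k => (x k - y k) ^ 2)
        (fun k _ => sq_nonneg _) (mem_univ j)))
      rcases le_total (x j) (y j) with hxy | hxy <;> simp [z, hxy, le_abs_self]
    calc _ ≤ 2 * d * R ^ (((d : ℝ) - 1) / d) * M ^ ((1 : ℝ) / d) *
          ((s.piecewise z x j - z j) ^ ((1 : ℝ) / d) + h ^ ((1 : ℝ) / d)) :=
          sub_update_le hh hmono hbdry hS hw (hh.le.trans (hz j).1.le)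
            (hwj ▸ min_le_left _ _)
      _ ≤ C := by
        rw [hwj, hC]
        have hR : 0 < R := hh.trans ((hx j).1.trans_le (hx j).2)
        gcongr
        exact sub_nonneg.2 (min_le_left _ _)
  calc u x - u y ≤ u x - u z := by linarith
    _ ≤ d * C := hxz
    _ = _ := by ring

end Scheme

theorem stmt2_general {d : ℕ} (h : ℝ) (hh : 0 < h)
    (u : (Fin d → ℝ) → ℝ)
    (hu_mono : MonotoneOn u {x | ∀ i, 0 ≤ x i})
    (hbdry : ∀ x : Fin d → ℝ, (∀ i, 0 ≤ x i) → (¬ ∀ i, h < x i) → u x = 0)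
    (R : ℝ)
    (M : ℝ)
    (hMbound : ∀ x : Fin d → ℝ, (∀ i, h < x i ∧ x i ≤ R) → |Sh h x u| ≤ M) :
    ∀ x y : Fin d → ℝ, (∀ i, h < x i ∧ x i ≤ R) → (∀ i, h < y i ∧ y i ≤ R) →
      |u x - u y| ≤ 2 * (d : ℝ)^2 * R ^ (((d : ℝ) - 1) / d) * M ^ ((1 : ℝ) / d) *
        ((Real.sqrt (∑ i, (x i - y i)^2)) ^ ((1 : ℝ) / d) + h ^ ((1 : ℝ) / d)) := by
  intro x y hx hy
  have hdist : ∑ i, (y i - x i) ^ 2 = ∑ i, (x i - y i) ^ 2 :=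
    sum_congr rfl fun i _ => by ring
  rw [abs_sub_le_iff]
  exact ⟨sub_le_of_Sh_le hh hu_mono hbdry hMbound hx hy,
    hdist ▸ sub_le_of_Sh_le hh hu_mono hbdry hMbound hy hx⟩

/-- Approximate Hölder (1/d) regularity for Pareto-monotone functions vanishing on `Γ_h`. -/
theorem stmt2 {d : ℕ} (h : ℝ) (hh : 0 < h)
    (u : (Fin d → ℝ) → ℝ)
    (hu_mono : MonotoneOn u {x | ∀ i, 0 ≤ x i})
    (hu_loc : ∀ R : ℝ, ∃ M, ∀ x : Fin d → ℝ, (∀ i, 0 ≤ x i ∧ x i ≤ R) → |u x| ≤ M)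
    (hbdry : ∀ x : Fin d → ℝ, (∀ i, 0 ≤ x i) → (¬ ∀ i, h < x i) → u x = 0)
    (R : ℝ) (hR : 0 < R)
    (M : ℝ) (hM : 0 ≤ M)
    (hMbound : ∀ x : Fin d → ℝ, (∀ i, h < x i ∧ x i ≤ R) → |Sh h x u| ≤ M) :
    ∀ x y : Fin d → ℝ, (∀ i, h < x i ∧ x i ≤ R) → (∀ i, h < y i ∧ y i ≤ R) →
      |u x - u y| ≤ 2 * (d : ℝ)^2 * R ^ (((d : ℝ) - 1) / d) * M ^ ((1 : ℝ) / d) *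
        ((Real.sqrt (∑ i, (x i - y i)^2)) ^ ((1 : ℝ) / d) + h ^ ((1 : ℝ) / d)) :=
  stmt2_general h hh u hu_mono hbdry R M hMbound
end

section
/- Define \psi: \mathbb{R}^d \to \mathbb{R} by \psi(x) = d (x_1 \cdots x_d)^{1/d} for x in the open positive orthant and \psi(x)=0 otherwise. Then for every h>0 and every x \in (h\mathbf{1},\infty), \prod_{i=1}^d (\psi(x) - \psi(x - h e_i))/h \ge 1. -/
open Finset

/-- The discrete supersolution `ψ(x) = d (x₁ ⋯ x_d)^{1/d}` on the positive orthant. -/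
noncomputable def psi {d : ℕ} (x : Fin d → ℝ) : ℝ :=
  if ∀ i, 0 < x i then (d : ℝ) * (∏ i, x i) ^ ((1 : ℝ) / d) else 0

/-!
Write `G = (x₁ ⋯ x_d)^{1/d}`, so that `ψ(x) = d G`. Lowering the `i`-th coordinate by `h`
multiplies the product by `1 - h / xᵢ`, and Bernoulli's inequality `(1 - t)^{1/d} ≤ 1 - t / d`
(concavity of `t ↦ t^{1/d}`) gives `ψ(x) - ψ(x - h eᵢ) ≥ G h / xᵢ`. The lower bounds `G / xᵢ`
multiply to `G^d / (x₁ ⋯ x_d) = 1`.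
-/

theorem psi_of_pos {d : ℕ} {x : Fin d → ℝ} (hx : ∀ i, 0 < x i) :
    psi x = d * (∏ i, x i) ^ ((1 : ℝ) / d) :=
  if_pos hx

theorem prod_update_mul_eq {ι : Type*} [Fintype ι] [DecidableEq ι] (x : ι → ℝ) (i : ι) (b : ℝ) :
    (∏ j, Function.update x i b j) * x i = b * ∏ j, x j := by
  rw [prod_update_of_mem (mem_univ i), sdiff_singleton_eq_erase, ← mul_prod_erase _ _ (mem_univ i)]
  ring

theorem prod_rpow_inv_card_div_eq_one {ι : Type*} [Fintype ι] {x : ι → ℝ} (hx : ∀ i, 0 < x i) :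
    ∏ i, (∏ j, x j) ^ ((1 : ℝ) / Fintype.card ι) / x i = 1 := by
  rcases isEmpty_or_nonempty ι with _ | _
  · simp
  have hP : 0 < ∏ j, x j := prod_pos fun j _ => hx j
  have hcard : (Fintype.card ι : ℝ) ≠ 0 := Nat.cast_ne_zero.2 Fintype.card_ne_zero
  rw [prod_div_distrib, prod_const, card_univ, ← Real.rpow_natCast, ← Real.rpow_mul hP.le,
    one_div_mul_cancel hcard, Real.rpow_one, div_self hP.ne']

theorem geomMean_div_mul_le_psi_sub_psi_update {d : ℕ} {x : Fin d → ℝ} (hx : ∀ i, 0 < x i)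
    (i : Fin d) {h : ℝ} (hhx : h < x i) :
    (∏ j, x j) ^ ((1 : ℝ) / d) / x i * h ≤ psi x - psi (Function.update x i (x i - h)) := by
  have hd : (1 : ℝ) ≤ d := Nat.one_le_cast.2 (Fin.pos i)
  have hP : 0 ≤ ∏ j, x j := prod_nonneg fun j _ => (hx j).le
  have ht : h / x i ≤ 1 := (div_le_one (hx i)).2 hhx.le
  have hupdate : ∀ j, 0 < Function.update x i (x i - h) j := by
    intro j
    rcases eq_or_ne j i with rfl | hj
    · simpa using hhx
    · simpa [Function.update_of_ne hj] using hx j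
  have hprod : ∏ j, Function.update x i (x i - h) j = (∏ j, x j) * (1 - h / x i) := by
    rw [← mul_left_inj' (hx i).ne', prod_update_mul_eq, mul_right_comm, mul_assoc,
      one_sub_div (hx i).ne', mul_div_cancel₀ _ (hx i).ne', mul_comm]
  have hbernoulli : (1 - h / x i) ^ ((1 : ℝ) / d) ≤ 1 - 1 / d * (h / x i) := by
    simpa [sub_eq_add_neg] using rpow_one_add_le_one_add_mul_self (s := -(h / x i))
      (by linarith) (p := 1 / d) (by positivity) (div_le_one_of_le₀ hd (by positivity))
  calc (∏ j, x j) ^ ((1 : ℝ) / d) / x i * h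
        = d * (∏ j, x j) ^ ((1 : ℝ) / d)
          - d * ((∏ j, x j) ^ ((1 : ℝ) / d) * (1 - 1 / d * (h / x i))) := by
        field_simp
        ring
    _ ≤ d * (∏ j, x j) ^ ((1 : ℝ) / d)
          - d * ((∏ j, x j) ^ ((1 : ℝ) / d) * (1 - h / x i) ^ ((1 : ℝ) / d)) := by gcongr
    _ = psi x - psi (Function.update x i (x i - h)) := by
        rw [psi_of_pos hx, psi_of_pos hupdate, hprod, Real.mul_rpow hP (by linarith)]

/-- `ψ` is a discrete supersolution of the scheme with right-hand side `1`. -/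
theorem stmt3 {d : ℕ} (h : ℝ) (hh : 0 < h) (x : Fin d → ℝ) (hx : ∀ i, h < x i) :
    1 ≤ ∏ i : Fin d, (psi x - psi (Function.update x i (x i - h))) / h := by
  have hxpos : ∀ i, 0 < x i := fun i => hh.trans (hx i)
  calc (1 : ℝ) = ∏ i : Fin d, (∏ j, x j) ^ ((1 : ℝ) / d) / x i := by
        simpa using (prod_rpow_inv_card_div_eq_one hxpos).symm
    _ ≤ _ := by
        refine prod_le_prod (fun i _ => div_nonneg ?_ (hxpos i).le) fun i _ =>
          (le_div_iff₀ hh).2 (geomMean_div_mul_le_psi_sub_psi_update hxpos i (hx i))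
        exact Real.rpow_nonneg (prod_nonneg fun j _ => (hxpos j).le) _
end

section
/- Let f(x) = f_1(x_1) \cdots f_d(x_d) be a separable nonnegative continuous density on the positive orthant, with each f_i continuous. Then U(x) = d \left( \int_{[0,x]} f(y)\,dy \right)^{1/d} satisfies U_{x_1} \cdots U_{x_d} = f at every point x in the open positive orthant where all the one-dimensional integrals \int_0^{x_i} f_i are positive, and U = 0 on the boundary of the orthant. -/
open Finset

/-!
Since `f` is separable, `U(x) = d (∏ᵢ Fᵢ(xᵢ))^{1/d}` with `Fᵢ(t) = ∫₀ᵗ fᵢ`, so by the fundamental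
theorem of calculus `∂ᵢU(x) = fᵢ(xᵢ) P^{1/d} / Fᵢ(xᵢ)` where `P = ∏ⱼ Fⱼ(xⱼ) > 0`. Multiplying over `i`
gives `∏ᵢ fᵢ(xᵢ) · (P^{1/d})^d / P = ∏ᵢ fᵢ(xᵢ)`. On the boundary some `xᵢ = 0`, so a factor
`Fᵢ(0)` of the product vanishes.
-/

lemma prod_apply_update_eq_mul {ι : Type*} [Fintype ι] [DecidableEq ι] (G : ι → ℝ → ℝ)
    (x : ι → ℝ) (i : ι) (t : ℝ) :
    ∏ j, G j (Function.update x i t j) = G i t * ∏ j ∈ univ \ {i}, G j (x j) := by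
  simp only [Function.apply_update G x i t]
  exact prod_update_of_mem (mem_univ i) _ _

lemma hasDerivAt_const_mul_prod_apply_update_rpow {ι : Type*} [Fintype ι] [DecidableEq ι]
    {G : ι → ℝ → ℝ} {x : ι → ℝ} {i : ι} {g : ℝ} (hG : HasDerivAt (G i) g (x i))
    (hpos : ∀ j, 0 < G j (x j)) (c p : ℝ) :
    HasDerivAt (fun t => c * (∏ j, G j (Function.update x i t j)) ^ p)
      (c * p * g * (∏ j, G j (x j)) ^ p / G i (x i)) (x i) := by
  set C := ∏ j ∈ univ \ {i}, G j (x j)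
  have hP : ∏ j, G j (x j) = G i (x i) * C := by
    simpa using prod_apply_update_eq_mul G x i (x i)
  have hC : 0 < C := prod_pos fun j _ => hpos j
  have hPpos : G i (x i) * C ≠ 0 := (mul_pos (hpos i) hC).ne'
  simp only [prod_apply_update_eq_mul G x i, hP]
  refine (((hG.mul_const C).rpow_const (p := p) (Or.inl hPpos)).const_mul c).congr_deriv ?_
  rw [Real.rpow_sub_one hPpos]
  field_simp [(hpos i).ne']

lemma prod_mul_prod_rpow_inv_card_div {ι : Type*} [Fintype ι] [Nonempty ι] (g a : ι → ℝ)
    (ha : ∀ i, 0 < a i) :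
    ∏ i, (g i * (∏ j, a j) ^ ((1 : ℝ) / Fintype.card ι) / a i) = ∏ i, g i := by
  have hP : 0 < ∏ j, a j := prod_pos fun j _ => ha j
  rw [prod_div_distrib, prod_mul_distrib, prod_const, card_univ, one_div,
    Real.rpow_inv_natCast_pow hP.le Fintype.card_ne_zero, mul_div_assoc, div_self hP.ne', mul_one]

theorem stmt8_general {d : ℕ} (hd : 0 < d) (fi : Fin d → ℝ → ℝ)
    (hcont : ∀ i, Continuous (fi i))
    (U : (Fin d → ℝ) → ℝ)
    (hU : ∀ x, U x = (d : ℝ) * (∏ i, ∫ t in (0:ℝ)..(x i), fi i t) ^ ((1 : ℝ) / d)) :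
    (∀ x : Fin d → ℝ, (∀ i, 0 < x i) → (∀ i, 0 < ∫ t in (0:ℝ)..(x i), fi i t) →
      ∃ g : Fin d → ℝ,
        (∀ i, HasDerivAt (fun t : ℝ => U (Function.update x i t)) (g i) (x i)) ∧
        ∏ i, g i = ∏ i, fi i (x i)) ∧
    (∀ x : Fin d → ℝ, (∀ i, 0 ≤ x i) → (∃ i, x i = 0) → U x = 0) := by
  have hd' : (d : ℝ) ≠ 0 := Nat.cast_ne_zero.mpr hd.ne'
  set F : Fin d → ℝ → ℝ := fun i s => ∫ t in (0:ℝ)..s, fi i t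
  have hF : ∀ i s, HasDerivAt (F i) (fi i s) s := fun i s =>
    (hcont i).integral_hasStrictDerivAt 0 s |>.hasDerivAt
  refine ⟨fun x _ hpos => ⟨fun i => fi i (x i) * (∏ j, F j (x j)) ^ ((1 : ℝ) / d) / F i (x i),
    fun i => ?_, ?_⟩, fun x _ ⟨i, hi⟩ => ?_⟩
  · simp only [hU]
    convert hasDerivAt_const_mul_prod_apply_update_rpow (hF i (x i)) hpos (d : ℝ) (1 / d) using 1
    field_simp
  · have : Nonempty (Fin d) := ⟨⟨0, hd⟩⟩
    simpa using prod_mul_prod_rpow_inv_card_div (fun i => fi i (x i)) (fun i => F i (x i)) hpos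
  · rw [hU, prod_eq_zero (mem_univ i) (by rw [hi, intervalIntegral.integral_same]),
      Real.zero_rpow (one_div_ne_zero hd'), mul_zero]

/-- For a separable density `f(x) = f₁(x₁)⋯f_d(x_d)`, the function
`U(x) = d (∫_{[0,x]} f)^{1/d} = d (∏ᵢ ∫₀^{xᵢ} fᵢ)^{1/d}` is a classical solution of
`U_{x₁} ⋯ U_{x_d} = f` at points of the open positive orthant where all the
one-dimensional integrals are positive, and `U = 0` on the boundary of the orthant. -/
theorem stmt8 {d : ℕ} (hd : 0 < d) (fi : Fin d → ℝ → ℝ)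
    (hcont : ∀ i, Continuous (fi i)) (hnonneg : ∀ i t, 0 ≤ fi i t)
    (U : (Fin d → ℝ) → ℝ)
    (hU : ∀ x, U x = (d : ℝ) * (∏ i, ∫ t in (0:ℝ)..(x i), fi i t) ^ ((1 : ℝ) / d)) :
    (∀ x : Fin d → ℝ, (∀ i, 0 < x i) → (∀ i, 0 < ∫ t in (0:ℝ)..(x i), fi i t) →
      ∃ g : Fin d → ℝ,
        (∀ i, HasDerivAt (fun t : ℝ => U (Function.update x i t)) (g i) (x i)) ∧
        ∏ i, g i = ∏ i, fi i (x i)) ∧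
    (∀ x : Fin d → ℝ, (∀ i, 0 ≤ x i) → (∃ i, x i = 0) → U x = 0) :=
  stmt8_general hd fi hcont U hU
end

section
/- For d \ge 1 define U_4(x) = d \left( \prod_{i=1}^d x_i \cdot \sum_{i=1}^d x_i^9 \right)^{1/d} on the open positive orthant. Then (U_4)_{x_1} \cdots (U_4)_{x_d} = \left( \sum_{i=1}^d x_i^9 \right)^{1-d} \prod_{j=1}^d \left( 9 x_j^9 + \sum_{i=1}^d x_i^9 \right) at every point of the open positive orthant. -/
/-!
Write `F = (∏ᵢ xᵢ) · ∑ᵢ xᵢ⁹`, so `U₄ = d F^{1/d}` and `∂ᵢU₄ = F^{1/d - 1} ∂ᵢF`. Since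
`∏ₖ xₖ = xᵢ cᵢ` with `cᵢ = ∏_{k ≠ i} xₖ`, the product rule gives `∂ᵢF = cᵢ (9xᵢ⁹ + ∑ₖ xₖ⁹)`.
Multiplying over `i`, the factors `F^{1/d - 1}` contribute `F^{1-d}` and the `cᵢ` contribute
`(∏ᵢ xᵢ)^{d-1}`, which cancels the product part of `F^{1-d}` and leaves `(∑ᵢ xᵢ⁹)^{1-d}`.
-/

open Finset

section Update

variable {ι R : Type*} [Fintype ι] [DecidableEq ι]

theorem prod_update_eq_mul_prod_erase [CommMonoid R] (x : ι → R) (i : ι) (t : R) :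
    ∏ k, Function.update x i t k = t * ∏ k ∈ univ.erase i, x k := by
  rw [prod_update_of_mem (mem_univ i), sdiff_singleton_eq_erase]

theorem sum_pow_update_eq_add_sum_erase [CommSemiring R] (x : ι → R) (i : ι) (t : R) (n : ℕ) :
    ∑ k, Function.update x i t k ^ n = t ^ n + ∑ k ∈ univ.erase i, x k ^ n := by
  have hpow : (fun k => Function.update x i t k ^ n) = Function.update (x · ^ n) i (t ^ n) :=
    funext (Function.apply_update (fun _ v => v ^ n) x i t)
  rw [hpow, sum_update_of_mem (mem_univ i), sdiff_singleton_eq_erase]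

theorem prod_prod_erase_eq_pow [CommMonoid R] (x : ι → R) :
    ∏ i, ∏ k ∈ univ.erase i, x k = (∏ k, x k) ^ (Fintype.card ι - 1) := by
  rw [prod_comm' (t' := univ) (s' := fun k => univ.erase k) (by simp [eq_comm])]
  simp [card_erase_of_mem, prod_pow]

theorem hasDerivAt_prod_mul_sum_pow_update {𝕜 : Type*} [NontriviallyNormedField 𝕜]
    (x : ι → 𝕜) (i : ι) (n : ℕ) :
    HasDerivAt (fun t => (∏ k, Function.update x i t k) * ∑ k, Function.update x i t k ^ n)
      ((∏ k ∈ univ.erase i, x k) * (n * x i ^ n + ∑ k, x k ^ n)) (x i) := by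
  simp only [prod_update_eq_mul_prod_erase, sum_pow_update_eq_add_sum_erase]
  have hprod := hasDerivAt_mul_const (x := x i) (∏ k ∈ univ.erase i, x k)
  have hsum := (hasDerivAt_pow n (x i)).add_const (∑ k ∈ univ.erase i, x k ^ n)
  refine (hprod.mul hsum).congr_deriv ?_
  rw [← add_sum_erase _ _ (mem_univ i)]
  rcases n with _ | n
  · simp
  · rw [add_tsub_cancel_right]
    push_cast
    ring

end Update

theorem HasDerivAt.const_mul_rpow_one_div {f : ℝ → ℝ} {f' a d : ℝ} (hf : HasDerivAt f f' a)
    (ha : f a ≠ 0) (hd : d ≠ 0) :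
    HasDerivAt (fun t => d * f t ^ (1 / d)) (f a ^ (1 / d - 1) * f') a := by
  refine ((hf.rpow_const (p := 1 / d) (Or.inl ha)).const_mul d).congr_deriv ?_
  field_simp

theorem rpow_one_div_sub_one_pow_mul_pow_sub_one {P S : ℝ} (hP : 0 < P) (hS : 0 < S) {n : ℕ}
    (hn : n ≠ 0) : ((P * S) ^ (1 / n - 1 : ℝ)) ^ n * P ^ (n - 1) = S ^ (1 - n : ℝ) := by
  have hexp : (1 / n - 1 : ℝ) * n = 1 - n := by
    field_simp [Nat.cast_ne_zero.mpr hn]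
  rw [← Real.rpow_natCast _ n, ← Real.rpow_mul (by positivity), hexp, ← Real.rpow_natCast P,
    Nat.cast_sub (Nat.one_le_iff_ne_zero.mpr hn), Real.mul_rpow hP.le hS.le, mul_right_comm,
    ← Real.rpow_add hP, Nat.cast_one, sub_add_sub_cancel', sub_self, Real.rpow_zero, one_mul]

/-- `U₄(x) = d(∏ᵢ xᵢ ⋅ ∑ᵢ xᵢ⁹)^{1/d}` solves
`(U₄)_{x₁}⋯(U₄)_{x_d} = (∑ᵢ xᵢ⁹)^{1-d} ∏ⱼ (9xⱼ⁹ + ∑ᵢ xᵢ⁹)` on the open positive orthant. -/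
theorem stmt11 {d : ℕ} (hd : 1 ≤ d) (U : (Fin d → ℝ) → ℝ)
    (hU : ∀ x, U x = (d : ℝ) * ((∏ i, x i) * ∑ i, (x i) ^ 9) ^ ((1 : ℝ) / d)) :
    ∀ x : Fin d → ℝ, (∀ i, 0 < x i) →
      ∃ g : Fin d → ℝ,
        (∀ i, HasDerivAt (fun t : ℝ => U (Function.update x i t)) (g i) (x i)) ∧
        ∏ i, g i = (∑ i, (x i) ^ 9) ^ ((1 : ℝ) - d) *
          ∏ j, (9 * (x j) ^ 9 + ∑ i, (x i) ^ 9) := by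
  intro x hx
  have hd0 : d ≠ 0 := Nat.one_le_iff_ne_zero.mp hd
  have : Nonempty (Fin d) := ⟨⟨0, hd⟩⟩
  have hP : 0 < ∏ i, x i := prod_pos fun i _ => hx i
  have hS : 0 < ∑ i, x i ^ 9 := sum_pos (fun i _ => pow_pos (hx i) 9) univ_nonempty
  refine ⟨fun i => ((∏ k, x k) * ∑ k, x k ^ 9) ^ ((1 : ℝ) / d - 1) *
      ((∏ k ∈ univ.erase i, x k) * (9 * x i ^ 9 + ∑ k, x k ^ 9)), fun i => ?_, ?_⟩
  · simpa [hU] using (hasDerivAt_prod_mul_sum_pow_update x i 9).const_mul_rpow_one_div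
      (by simpa using (mul_pos hP hS).ne') (Nat.cast_ne_zero.mpr hd0)
  · rw [prod_mul_distrib, prod_const, prod_mul_distrib, prod_prod_erase_eq_pow, card_univ,
      Fintype.card_fin, ← mul_assoc, rpow_one_div_sub_one_pow_mul_pow_sub_one hP hS hd0]
end
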